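/- Let V be a finite-dimensional complex inner product space with dim_ℂ V = n ≥ 1, R a Kähler curvature tensor on V, σ the uniform (normalized, rotation-invariant) probability measure on the unit sphere S(V) = {v ∈ V : |v| = 1}, and e_1, …, e_n any orthonormal basis of V. Then ∫_{S(V)} R(v,v,v,v) dσ(v) = (2/(n(n+1))) · Σ_{i,j=1}^{n} R(e_i,e_i,e_j,e_j). -/

import Mathlib

/-- A Kähler curvature tensor on a complex inner product space `V`:
`ℂ`-linear in the 1st and 3rd arguments, conjugate-linear in the 2nd and 4th,
with the symmetries of the curvature tensor of a Kähler metric at a point. -/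
structure KahlerCurvatureTensor (V : Type*) [NormedAddCommGroup V]
    [InnerProductSpace ℂ V] where
  R : V → V → V → V → ℂ
  map_add₁ : ∀ x x' y z w, R (x + x') y z w = R x y z w + R x' y z w
  map_smul₁ : ∀ (c : ℂ) (x y z w : V), R (c • x) y z w = c * R x y z w
  map_add₂ : ∀ x y y' z w, R x (y + y') z w = R x y z w + R x y' z w
  map_smul₂ : ∀ (c : ℂ) (x y z w : V), R x (c • y) z w = (starRingEnd ℂ) c * R x y z w
  map_add₃ : ∀ x y z z' w, R x y (z + z') w = R x y z w + R x y z' w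
  map_smul₃ : ∀ (c : ℂ) (x y z w : V), R x y (c • z) w = c * R x y z w
  map_add₄ : ∀ x y z w w', R x y z (w + w') = R x y z w + R x y z w'
  map_smul₄ : ∀ (c : ℂ) (x y z w : V), R x y z (c • w) = (starRingEnd ℂ) c * R x y z w
  symm_pair : ∀ x y z w, R x y z w = R z w x y
  symm_exch : ∀ x y z w, R x y z w = R z y x w
  symm_conj : ∀ x y z w, (starRingEnd ℂ) (R x y z w) = R y x w z

open MeasureTheory Complex

noncomputable section KahlerAux

variable {V : Type*} [NormedAddCommGroup V] [InnerProductSpace ℂ V]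

local notation "⟪" x ", " y "⟫" => @inner ℂ _ _ x y
local notation "conj'" => starRingEnd ℂ

/-- Monomial of degree (2,2) in the coordinates w.r.t. an orthonormal basis. -/
def kmono {n : ℕ} (b : OrthonormalBasis (Fin n) ℂ V) (i j k l : Fin n) (v : V) : ℂ :=
  ⟪b i, v⟫ * conj' ⟪b j, v⟫ * (⟪b k, v⟫ * conj' ⟪b l, v⟫)

lemma continuous_kmono {n : ℕ} (b : OrthonormalBasis (Fin n) ℂ V) (i j k l : Fin n) :
    Continuous (kmono b i j k l) := by
  have h : ∀ a : Fin n, Continuous fun v : V => (⟪b a, v⟫ : ℂ) := fun a =>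
    (innerSL ℂ (b a)).continuous
  have hc : ∀ a : Fin n, Continuous fun v : V => conj' (⟪b a, v⟫ : ℂ) := fun a =>
    continuous_star.comp (h a)
  exact ((h i).mul (hc j)).mul ((h k).mul (hc l))

namespace KahlerCurvatureTensor

variable (T : KahlerCurvatureTensor V)

lemma sum₁ {ι : Type*} (s : Finset ι) (f : ι → V) (y z w : V) :
    T.R (∑ i ∈ s, f i) y z w = ∑ i ∈ s, T.R (f i) y z w :=
  map_sum (AddMonoidHom.mk' (fun x => T.R x y z w) (fun a b => T.map_add₁ a b y z w)) f s

lemma sum₂ {ι : Type*} (s : Finset ι) (x : V) (f : ι → V) (z w : V) :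
    T.R x (∑ i ∈ s, f i) z w = ∑ i ∈ s, T.R x (f i) z w :=
  map_sum (AddMonoidHom.mk' (fun y => T.R x y z w) (fun a b => T.map_add₂ x a b z w)) f s

lemma sum₃ {ι : Type*} (s : Finset ι) (x y : V) (f : ι → V) (w : V) :
    T.R x y (∑ i ∈ s, f i) w = ∑ i ∈ s, T.R x y (f i) w :=
  map_sum (AddMonoidHom.mk' (fun z => T.R x y z w) (fun a b => T.map_add₃ x y a b w)) f s

lemma sum₄ {ι : Type*} (s : Finset ι) (x y z : V) (f : ι → V) :
    T.R x y z (∑ i ∈ s, f i) = ∑ i ∈ s, T.R x y z (f i) :=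
  map_sum (AddMonoidHom.mk' (fun w => T.R x y z w) (fun a b => T.map_add₄ x y z a b)) f s

lemma expand {n : ℕ} (b : OrthonormalBasis (Fin n) ℂ V) (v : V) :
    T.R v v v v = ∑ i, ∑ j, ∑ k, ∑ l,
      kmono b i j k l v * T.R (b i) (b j) (b k) (b l) := by
  simp only [kmono]
  conv_lhs => rw [← b.sum_repr' v]
  rw [T.sum₁]
  refine Finset.sum_congr rfl fun i _ => ?_
  rw [T.map_smul₁, T.sum₂, Finset.mul_sum]
  refine Finset.sum_congr rfl fun j _ => ?_
  rw [T.map_smul₂, T.sum₃, Finset.mul_sum, Finset.mul_sum]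
  refine Finset.sum_congr rfl fun k _ => ?_
  rw [T.map_smul₃, T.sum₄, Finset.mul_sum, Finset.mul_sum, Finset.mul_sum]
  refine Finset.sum_congr rfl fun l _ => ?_
  rw [T.map_smul₄]
  ring

end KahlerCurvatureTensor

lemma onb_of_orthonormal [FiniteDimensional ℂ V] {n : ℕ} (hn : 1 ≤ n)
    (hdim : Module.finrank ℂ V = n) (f : Fin n → V) (hf : Orthonormal ℂ f) :
    ∃ b' : OrthonormalBasis (Fin n) ℂ V, ⇑b' = f := by
  have : Nonempty (Fin n) := ⟨⟨0, hn⟩⟩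
  refine ⟨OrthonormalBasis.mk hf ?_, OrthonormalBasis.coe_mk _ _⟩
  exact (hf.linearIndependent.span_eq_top_of_card_eq_finrank (by simp [hdim])).ge

section MeasPart

variable [FiniteDimensional ℂ V] [MeasurableSpace V] [BorelSpace V]
  {n : ℕ} {σ : Measure V} [IsProbabilityMeasure σ]

lemma ae_norm_one' (σ : Measure V) [IsProbabilityMeasure σ]
    (hsphere : σ (Metric.sphere (0 : V) 1) = 1) :
    ∀ᵐ v ∂σ, ‖v‖ = 1 := by
  have hms : MeasurableSet (Metric.sphere (0 : V) 1) := Metric.isClosed_sphere.measurableSet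
  have h0 : σ (Metric.sphere (0 : V) 1)ᶜ = 0 := (prob_compl_eq_zero_iff hms).mpr hsphere
  have : ∀ᵐ v ∂σ, v ∈ Metric.sphere (0 : V) 1 := by
    rw [ae_iff]
    exact h0
  filter_upwards [this] with v hv
  simpa using hv

lemma integrable_kmono' (σ : Measure V) [IsProbabilityMeasure σ]
    (hsphere : σ (Metric.sphere (0 : V) 1) = 1)
    (b : OrthonormalBasis (Fin n) ℂ V) (i j k l : Fin n) :
    Integrable (kmono b i j k l) σ := by
  refine Integrable.mono' (integrable_const 1)
    (continuous_kmono b i j k l).aestronglyMeasurable ?_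
  filter_upwards [ae_norm_one' σ hsphere] with v hv
  have h1 : ∀ a : Fin n, ‖(⟪b a, v⟫ : ℂ)‖ ≤ 1 := fun a => by
    simpa [hv, b.orthonormal.1 a] using norm_inner_le_norm (𝕜 := ℂ) (b a) v
  have h2 : ∀ a : Fin n, ‖conj' (⟪b a, v⟫ : ℂ)‖ ≤ 1 := fun a => by
    rw [RCLike.norm_conj]; exact h1 a
  calc ‖kmono b i j k l v‖
      = ‖(⟪b i, v⟫:ℂ)‖ * ‖conj' (⟪b j, v⟫:ℂ)‖ * (‖(⟪b k, v⟫:ℂ)‖ * ‖conj' (⟪b l, v⟫:ℂ)‖) := by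
        simp [kmono, norm_mul]
    _ ≤ 1 := by
        have A : ‖(⟪b i, v⟫:ℂ)‖ * ‖conj' (⟪b j, v⟫:ℂ)‖ ≤ 1 :=
          mul_le_one₀ (h1 i) (norm_nonneg _) (h2 j)
        have B : ‖(⟪b k, v⟫:ℂ)‖ * ‖conj' (⟪b l, v⟫:ℂ)‖ ≤ 1 :=
          mul_le_one₀ (h1 k) (norm_nonneg _) (h2 l)
        exact mul_le_one₀ A (mul_nonneg (norm_nonneg _) (norm_nonneg _)) B

lemma integral_comp_unitary' (σ : Measure V)
    (hinv : ∀ U : V ≃ₗᵢ[ℂ] V, Measure.map (U : V → V) σ = σ)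
    (U : V ≃ₗᵢ[ℂ] V) {g : V → ℂ} (hg : AEStronglyMeasurable g σ) :
    ∫ v, g (U v) ∂σ = ∫ v, g v ∂σ := by
  conv_rhs => rw [← hinv U]
  rw [integral_map U.continuous.measurable.aemeasurable (by rwa [hinv U])]

lemma kmono_basis_indep' (σ : Measure V)
    (hinv : ∀ U : V ≃ₗᵢ[ℂ] V, Measure.map (U : V → V) σ = σ)
    (b b' : OrthonormalBasis (Fin n) ℂ V) (i j k l : Fin n) :
    ∫ v, kmono b' i j k l v ∂σ = ∫ v, kmono b i j k l v ∂σ := by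
  set U : V ≃ₗᵢ[ℂ] V := b.repr.trans b'.repr.symm with hU
  have key : ∀ (a : Fin n) (v : V), (⟪b' a, U v⟫ : ℂ) = ⟪b a, v⟫ := by
    intro a v
    rw [← b'.repr_apply_apply, ← b.repr_apply_apply, hU, LinearIsometryEquiv.trans_apply,
      LinearIsometryEquiv.apply_symm_apply]
  rw [← integral_comp_unitary' σ hinv U (continuous_kmono b' i j k l).aestronglyMeasurable]
  simp only [kmono, key]

end MeasPart

lemma balanced_pattern {n : ℕ} {i j k l : Fin n}
    (h : ∀ m : Fin n, ((if i = m then 1 else 0) + (if k = m then 1 else 0) : ℕ) =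
      (if j = m then 1 else 0) + (if l = m then 1 else 0)) :
    (i = j ∧ k = l) ∨ (i = l ∧ k = j) := by
  classical
  by_cases hj : j = i <;> by_cases hl : l = i <;> by_cases hk : k = i
  · exact Or.inl ⟨hj.symm, hk.trans hl.symm⟩
  · have h1 := h i; simp [hj, hl, hk] at h1
  · have h1 := h i; simp [hj, hl, hk] at h1
  · by_cases hlk : l = k
    · exact Or.inl ⟨hj.symm, hlk.symm⟩
    · have h2 := h k
      have hik : ¬ i = k := fun hh => hk hh.symm
      have hjk : ¬ j = k := by rw [hj]; exact hik
      simp [hik, hjk, hlk] at h2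
  · by_cases hjk : j = k
    · exact Or.inr ⟨hl.symm, hjk.symm⟩
    · have h2 := h k
      have hik : i = k := hk.symm
      have hlk : l = k := hl.trans hik
      simp [hik, hlk, hjk] at h2
  · by_cases hjk : j = k
    · exact Or.inr ⟨hl.symm, hjk.symm⟩
    · have h2 := h k
      have hik : ¬ i = k := fun hh => hk hh.symm
      have hlk : ¬ l = k := by rw [hl]; exact hik
      simp [hik, hlk, hjk] at h2
  · have h1 := h i; simp [hj, hl, hk] at h1
  · have h1 := h i; simp [hj, hl, hk] at h1


section MeasPart2

variable [FiniteDimensional ℂ V] [MeasurableSpace V] [BorelSpace V]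
  {n : ℕ} {σ : Measure V} [IsProbabilityMeasure σ]

lemma kmono_perm (hinv : ∀ U : V ≃ₗᵢ[ℂ] V, Measure.map (U : V → V) σ = σ)
    (b : OrthonormalBasis (Fin n) ℂ V) (π : Equiv.Perm (Fin n)) (i j k l : Fin n) :
    ∫ v, kmono b (π i) (π j) (π k) (π l) v ∂σ = ∫ v, kmono b i j k l v ∂σ := by
  calc ∫ v, kmono b (π i) (π j) (π k) (π l) v ∂σ
      = ∫ v, kmono (b.reindex π) (π i) (π j) (π k) (π l) v ∂σ :=
        (kmono_basis_indep' σ hinv b (b.reindex π) (π i) (π j) (π k) (π l)).symm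
    _ = ∫ v, kmono b i j k l v ∂σ := by
        simp only [kmono, OrthonormalBasis.reindex_apply, Equiv.symm_apply_apply]

lemma kmono_phase_zero (hn : 1 ≤ n) (hdim : Module.finrank ℂ V = n)
    (hinv : ∀ U : V ≃ₗᵢ[ℂ] V, Measure.map (U : V → V) σ = σ)
    (b : OrthonormalBasis (Fin n) ℂ V) (m i j k l : Fin n)
    (hcnt : ((if i = m then 1 else 0) + (if k = m then 1 else 0) : ℕ) ≠
      (if j = m then 1 else 0) + (if l = m then 1 else 0)) :
    ∫ v, kmono b i j k l v ∂σ = 0 := by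
  classical
  set f : Fin n → V := fun a => if a = m then (Complex.I : ℂ) • b a else b a with hf
  have hsf : ∀ a, f a = (if a = m then Complex.I else 1) • b a := by
    intro a; by_cases ha : a = m <;> simp [hf, ha]
  have hon : Orthonormal ℂ f := by
    rw [orthonormal_iff_ite]
    intro a a'
    rw [hsf, hsf, inner_smul_left, inner_smul_right,
      orthonormal_iff_ite.1 b.orthonormal a a']
    by_cases h : a = a'
    · subst h
      by_cases ha : a = m <;> simp [ha, Complex.conj_I]
    · simp [h]
  obtain ⟨b2, hb2⟩ := onb_of_orthonormal hn hdim f hon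
  set t : Fin n → ℂ := fun a => if a = m then -Complex.I else 1 with ht
  have key : ∀ (a : Fin n) (v : V), (⟪b2 a, v⟫ : ℂ) = t a * ⟪b a, v⟫ := by
    intro a v
    rw [hb2]
    by_cases ha : a = m <;> simp [hf, ht, ha, inner_smul_left, Complex.conj_I] <;> ring
  have hpt : ∀ v, kmono b2 i j k l v
      = (t i * conj' (t j) * (t k * conj' (t l))) * kmono b i j k l v := by
    intro v; simp only [kmono, key, map_mul]; ring
  have hW : ∫ v, kmono b i j k l v ∂σ
      = (t i * conj' (t j) * (t k * conj' (t l))) * ∫ v, kmono b i j k l v ∂σ := by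
    conv_lhs => rw [← kmono_basis_indep' σ hinv b b2 i j k l]
    simp only [hpt]
    exact integral_const_mul _ _
  have hW1 : t i * conj' (t j) * (t k * conj' (t l)) ≠ 1 := by
    by_cases hi : i = m <;> by_cases hj : j = m <;> by_cases hk : k = m <;> by_cases hl : l = m <;>
      simp only [hi, hj, hk, hl, if_true, if_false, ite_true, ite_false] at hcnt <;>
      first
        | (exact absurd rfl hcnt)
        | (simp [ht, hi, hj, hk, hl, Complex.ext_iff]; try norm_num)
  have h0 : (t i * conj' (t j) * (t k * conj' (t l)) - 1) * ∫ v, kmono b i j k l v ∂σ = 0 := by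
    linear_combination -hW
  rcases mul_eq_zero.1 h0 with h | h
  · exact absurd (sub_eq_zero.1 h) hW1
  · exact h

lemma kmono_sum_integral_one (hsphere : σ (Metric.sphere (0 : V) 1) = 1)
    (b : OrthonormalBasis (Fin n) ℂ V) :
    (∑ i : Fin n, ∑ k : Fin n, ∫ v, kmono b i i k k v ∂σ) = 1 := by
  have hint : ∀ i k : Fin n, Integrable (kmono b i i k k) σ := fun i k =>
    integrable_kmono' σ hsphere b i i k k
  have step : ∀ i : Fin n, (∑ k : Fin n, ∫ v, kmono b i i k k v ∂σ)
      = ∫ v, ∑ k : Fin n, kmono b i i k k v ∂σ := fun i =>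
    (integral_finset_sum _ fun k _ => hint i k).symm
  simp_rw [step]
  rw [← integral_finset_sum _ (fun i _ => integrable_finset_sum _ (fun k _ => hint i k))]
  have hae : ∀ᵐ v ∂σ, (∑ i : Fin n, ∑ k : Fin n, kmono b i i k k v) = 1 := by
    filter_upwards [ae_norm_one' σ hsphere] with v hv
    have hsum : (∑ a : Fin n, (⟪b a, v⟫ : ℂ) * conj' ⟪b a, v⟫) = 1 := by
      calc ∑ a : Fin n, (⟪b a, v⟫ : ℂ) * conj' ⟪b a, v⟫
          = ∑ a : Fin n, (⟪v, b a⟫ : ℂ) * ⟪b a, v⟫ := by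
            refine Finset.sum_congr rfl fun a _ => ?_
            rw [inner_conj_symm]
            ring
        _ = ⟪v, v⟫ := b.sum_inner_mul_inner v v
        _ = 1 := by
            rw [inner_self_eq_norm_sq_to_K (𝕜 := ℂ), hv]
            norm_num
    calc (∑ i : Fin n, ∑ k : Fin n, kmono b i i k k v)
        = (∑ a : Fin n, (⟪b a, v⟫:ℂ) * conj' ⟪b a, v⟫) *
            (∑ a : Fin n, (⟪b a, v⟫:ℂ) * conj' ⟪b a, v⟫) := by
          rw [Finset.sum_mul_sum]
          rfl
      _ = 1 := by rw [hsum, one_mul]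
  rw [integral_congr_ae hae]
  simp

lemma kmono_swap_mid (b : OrthonormalBasis (Fin n) ℂ V) (p q : Fin n) :
    (fun v => kmono b p q q p v) = fun v => kmono b p p q q v := by
  funext v; simp only [kmono]; ring

lemma kmono_hadamard (hn : 1 ≤ n) (hdim : Module.finrank ℂ V = n)
    (hsphere : σ (Metric.sphere (0 : V) 1) = 1)
    (hinv : ∀ U : V ≃ₗᵢ[ℂ] V, Measure.map (U : V → V) σ = σ)
    (b : OrthonormalBasis (Fin n) ℂ V) (p q : Fin n) (hpq : p ≠ q) :
    ∫ v, kmono b p p p p v ∂σ = 2 * ∫ v, kmono b p p q q v ∂σ := by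
  classical
  set c : ℂ := (((Real.sqrt 2 : ℝ) : ℂ))⁻¹ with hc
  have h2 : ((Real.sqrt 2 : ℝ) : ℂ) * ((Real.sqrt 2 : ℝ) : ℂ) = 2 := by
    rw [← Complex.ofReal_mul, Real.mul_self_sqrt (by norm_num)]
    norm_num
  have hc2 : c * c = 2⁻¹ := by rw [hc, ← mul_inv, h2]
  have hcconj : conj' c = c := by rw [hc, map_inv₀, Complex.conj_ofReal]
  have hqp : q ≠ p := Ne.symm hpq
  set f : Fin n → V := fun a =>
    if a = p then c • (b p + b q) else if a = q then c • (b p - b q) else b a with hf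
  have hb := orthonormal_iff_ite.1 b.orthonormal
  have hfp : f p = c • (b p + b q) := by simp [hf]
  have hfq : f q = c • (b p - b q) := by simp [hf, hqp]
  have hfo : ∀ a, ¬ a = p → ¬ a = q → f a = b a := by
    intro a h1 h2; simp [hf, h1, h2]
  have e1 : (⟪b p + b q, b p + b q⟫ : ℂ) = 2 := by
    rw [inner_add_left, inner_add_right, inner_add_right, hb p p, hb p q, hb q p, hb q q]
    simp [hpq, hqp]
    norm_num
  have e2 : (⟪b p - b q, b p - b q⟫ : ℂ) = 2 := by
    rw [inner_sub_left, inner_sub_right, inner_sub_right, hb p p, hb p q, hb q p, hb q q]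
    simp [hpq, hqp]
    norm_num
  have e3 : (⟪b p + b q, b p - b q⟫ : ℂ) = 0 := by
    rw [inner_add_left, inner_sub_right, inner_sub_right, hb p p, hb p q, hb q p, hb q q]
    simp [hpq, hqp]
  have e4 : (⟪b p - b q, b p + b q⟫ : ℂ) = 0 := by
    rw [inner_sub_left, inner_add_right, inner_add_right, hb p p, hb p q, hb q p, hb q q]
    simp [hpq, hqp]
  have e5 : ∀ a, ¬ a = p → ¬ a = q → (⟪b p + b q, b a⟫ : ℂ) = 0 := by
    intro a h1 h2
    rw [inner_add_left, hb p a, hb q a]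
    have h1x : ¬ p = a := fun hh => h1 hh.symm
    have h2x : ¬ q = a := fun hh => h2 hh.symm
    simp [h1x, h2x]
  have e6 : ∀ a, ¬ a = p → ¬ a = q → (⟪b p - b q, b a⟫ : ℂ) = 0 := by
    intro a h1 h2
    have h1x : ¬ p = a := fun hh => h1 hh.symm
    have h2x : ¬ q = a := fun hh => h2 hh.symm
    rw [inner_sub_left, hb p a, hb q a]
    simp [h1x, h2x]
  have e7 : ∀ a, ¬ a = p → ¬ a = q → (⟪b a, b p + b q⟫ : ℂ) = 0 := by
    intro a h1 h2
    rw [inner_add_right, hb a p, hb a q]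
    simp [h1, h2]
  have e8 : ∀ a, ¬ a = p → ¬ a = q → (⟪b a, b p - b q⟫ : ℂ) = 0 := by
    intro a h1 h2
    rw [inner_sub_right, hb a p, hb a q]
    simp [h1, h2]
  have hon : Orthonormal ℂ f := by
    rw [orthonormal_iff_ite]
    intro a a'
    by_cases ha : a = p
    · subst ha
      by_cases hax : a' = a
      · subst hax
        rw [hfp, inner_smul_left, inner_smul_right, e1, hcconj, if_pos rfl]
        linear_combination 2 * hc2
      · by_cases hay : a' = q
        · subst hay
          rw [hfp, hfq, inner_smul_left, inner_smul_right, e3, if_neg hpq]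
          ring
        · rw [hfp, hfo a' hax hay, inner_smul_left, e5 a' hax hay, if_neg (Ne.symm hax)]
          ring
    · by_cases haq : a = q
      · subst haq
        by_cases hax : a' = p
        · subst hax
          rw [hfq, hfp, inner_smul_left, inner_smul_right, e4, if_neg hqp]
          ring
        · by_cases hay : a' = a
          · subst hay
            rw [hfq, inner_smul_left, inner_smul_right, e2, hcconj, if_pos rfl]
            linear_combination 2 * hc2
          · rw [hfq, hfo a' hax hay, inner_smul_left, e6 a' hax hay, if_neg (Ne.symm hay)]
            ring
      · by_cases hax : a' = p
        · subst hax
          rw [hfo a ha haq, hfp, inner_smul_right, e7 a ha haq, if_neg ha]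
          ring
        · by_cases hay : a' = q
          · subst hay
            rw [hfo a ha haq, hfq, inner_smul_right, e8 a ha haq, if_neg haq]
            ring
          · rw [hfo a ha haq, hfo a' hax hay, hb a a']
  obtain ⟨b2, hb2⟩ := onb_of_orthonormal hn hdim f hon
  have keyp : ∀ v : V, (⟪b2 p, v⟫ : ℂ) = c * (⟪b p, v⟫ + ⟪b q, v⟫) := by
    intro v; rw [hb2, hfp, inner_smul_left, inner_add_left, hcconj]
  set g : Fin 2 → Fin n := ![p, q] with hg
  have hpt2 : ∀ v : V, kmono b2 p p p p v
      = 4⁻¹ * ∑ z : Fin 2 × Fin 2 × Fin 2 × Fin 2,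
          kmono b (g z.1) (g z.2.1) (g z.2.2.1) (g z.2.2.2) v := by
    intro v
    rw [Fintype.sum_prod_type]
    simp only [Fintype.sum_prod_type, Fin.sum_univ_two, hg, Matrix.cons_val_zero,
      Matrix.cons_val_one, Matrix.head_cons]
    simp only [kmono, keyp, map_mul, map_add, hcconj]
    linear_combination ((c * c + 2⁻¹) *
      ((⟪b p, v⟫ + ⟪b q, v⟫) * (conj' (⟪b p, v⟫ : ℂ) + conj' (⟪b q, v⟫ : ℂ)))^2) * hc2
  have hsum : ∫ v, kmono b p p p p v ∂σ
      = 4⁻¹ * ∑ z : Fin 2 × Fin 2 × Fin 2 × Fin 2,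
          ∫ v, kmono b (g z.1) (g z.2.1) (g z.2.2.1) (g z.2.2.2) v ∂σ := by
    conv_lhs => rw [← kmono_basis_indep' σ hinv b b2 p p p p]
    simp only [hpt2]
    rw [integral_const_mul, integral_finset_sum _
      (fun z _ => integrable_kmono' σ hsphere b (g z.1) (g z.2.1) (g z.2.2.1) (g z.2.2.2))]
  have hz : ∀ i j k l : Fin n,
      ((if i = p then 1 else 0) + (if k = p then 1 else 0) : ℕ) ≠
        (if j = p then 1 else 0) + (if l = p then 1 else 0) →
      ∫ v, kmono b i j k l v ∂σ = 0 := fun i j k l hc =>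
    kmono_phase_zero hn hdim hinv b p i j k l hc
  have hswap : ∫ v, kmono b q q q q v ∂σ = ∫ v, kmono b p p p p v ∂σ := by
    have := kmono_perm hinv b (Equiv.swap p q) p p p p
    rwa [Equiv.swap_apply_left] at this
  have hswap2 : ∫ v, kmono b q q p p v ∂σ = ∫ v, kmono b p p q q v ∂σ := by
    have := kmono_perm hinv b (Equiv.swap p q) p p q q
    rwa [Equiv.swap_apply_left, Equiv.swap_apply_right] at this
  have hmid : ∫ v, kmono b p q q p v ∂σ = ∫ v, kmono b p p q q v ∂σ := by
    rw [kmono_swap_mid b p q]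
  have hmid2 : ∫ v, kmono b q p p q v ∂σ = ∫ v, kmono b q q p p v ∂σ := by
    rw [kmono_swap_mid b q p]
  have hEval : (∑ z : Fin 2 × Fin 2 × Fin 2 × Fin 2,
      ∫ v, kmono b (g z.1) (g z.2.1) (g z.2.2.1) (g z.2.2.2) v ∂σ)
      = 2 * ∫ v, kmono b p p p p v ∂σ + 4 * ∫ v, kmono b p p q q v ∂σ := by
    rw [Fintype.sum_prod_type]
    simp only [Fintype.sum_prod_type, Fin.sum_univ_two, hg, Matrix.cons_val_zero,
      Matrix.cons_val_one, Matrix.head_cons]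
    rw [hz p p p q (by simp [hpq, hqp]), hz p p q p (by simp [hpq, hqp]),
      hz p q p p (by simp [hpq, hqp]), hz q p p p (by simp [hpq, hqp]),
      hz q q q p (by simp [hpq, hqp]), hz q q p q (by simp [hpq, hqp]),
      hz q p q q (by simp [hpq, hqp]), hz p q q q (by simp [hpq, hqp]),
      hz p q p q (by simp [hpq, hqp]), hz q p q p (by simp [hpq, hqp]),
      hswap, hswap2, hmid, hmid2, hswap2]
    ring
  rw [hEval] at hsum
  linear_combination 2 * hsum


lemma exists_perm_pair {α : Type*} [DecidableEq α] {a b a2 b2 : α}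
    (h : a ≠ b) (h2 : a2 ≠ b2) : ∃ π : Equiv.Perm α, π a2 = a ∧ π b2 = b := by
  classical
  refine ⟨(Equiv.swap b2 ((Equiv.swap a a2) b)).trans (Equiv.swap a a2), ?_, ?_⟩
  · rw [Equiv.trans_apply]
    have h3 : a2 ≠ (Equiv.swap a a2) b := by
      intro hh
      have h4 := congrArg (Equiv.swap a a2) hh
      rw [Equiv.swap_apply_right, Equiv.swap_apply_self] at h4
      exact h h4
    rw [Equiv.swap_apply_of_ne_of_ne h2 h3, Equiv.swap_apply_right]
  · rw [Equiv.trans_apply, Equiv.swap_apply_left, Equiv.swap_apply_self]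

lemma kmono_moment [FiniteDimensional ℂ V] [MeasurableSpace V] [BorelSpace V]
    {n : ℕ} {σ : Measure V} [IsProbabilityMeasure σ]
    (hn : 1 ≤ n) (hdim : Module.finrank ℂ V = n)
    (hsphere : σ (Metric.sphere (0 : V) 1) = 1)
    (hinv : ∀ U : V ≃ₗᵢ[ℂ] V, Measure.map (U : V → V) σ = σ)
    (b : OrthonormalBasis (Fin n) ℂ V) (i j k l : Fin n) :
    ∫ v, kmono b i j k l v ∂σ
      = (((if i = j ∧ k = l then 1 else 0) + (if i = l ∧ j = k then 1 else 0)) : ℂ)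
          * ((n : ℂ) * ((n : ℂ) + 1))⁻¹ := by
  classical
  have hnn : ((n : ℂ) * ((n : ℂ) + 1)) ≠ 0 := by
    have h1 : (n : ℂ) ≠ 0 := Nat.cast_ne_zero.mpr (by omega)
    have h2 : ((n : ℂ) + 1) ≠ 0 := by
      intro h
      have : ((n + 1 : ℕ) : ℂ) = 0 := by push_cast; linear_combination h
      exact (Nat.cast_ne_zero.mpr (by omega)) this
    exact mul_ne_zero h1 h2
  -- value of diagonal and off-diagonal moments
  have hdiag : ∀ p p' : Fin n,
      ∫ v, kmono b p p p p v ∂σ = ∫ v, kmono b p' p' p' p' v ∂σ := by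
    intro p p'
    have := kmono_perm hinv b (Equiv.swap p p') p' p' p' p'
    rwa [Equiv.swap_apply_right] at this
  have hoff : ∀ p q p' q' : Fin n, p ≠ q → p' ≠ q' →
      ∫ v, kmono b p p q q v ∂σ = ∫ v, kmono b p' p' q' q' v ∂σ := by
    intro p q p' q' hpq hpq'
    obtain ⟨π, hπ1, hπ2⟩ := exists_perm_pair hpq hpq'
    have := kmono_perm hinv b π p' p' q' q'
    rwa [hπ1, hπ2] at this
  have hval : ∀ p q : Fin n, p ≠ q →
      ∫ v, kmono b p p q q v ∂σ = ((n : ℂ) * ((n : ℂ) + 1))⁻¹ ∧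
      ∫ v, kmono b p p p p v ∂σ = 2 * ((n : ℂ) * ((n : ℂ) + 1))⁻¹ := by
    intro p q hpq
    have hhad := kmono_hadamard hn hdim hsphere hinv b p q hpq
    have hnorm := kmono_sum_integral_one hsphere b
    have hterm : ∀ i' k' : Fin n, ∫ v, kmono b i' i' k' k' v ∂σ
        = if i' = k' then ∫ v, kmono b p p p p v ∂σ else ∫ v, kmono b p p q q v ∂σ := by
      intro i' k'
      by_cases h : i' = k'
      · subst h; rw [if_pos rfl]; exact hdiag i' p
      · rw [if_neg h]; exact hoff i' k' p q h hpq
    rw [Finset.sum_congr rfl (fun i' _ => Finset.sum_congr rfl (fun k' _ => hterm i' k'))] at hnorm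
    have hinner : ∀ i' : Fin n, (∑ k' : Fin n, if i' = k'
          then ∫ v, kmono b p p p p v ∂σ else ∫ v, kmono b p p q q v ∂σ)
        = (n : ℂ) * ∫ v, kmono b p p q q v ∂σ
            + (∫ v, kmono b p p p p v ∂σ - ∫ v, kmono b p p q q v ∂σ) := by
      intro i'
      have : ∀ k' : Fin n, (if i' = k'
            then ∫ v, kmono b p p p p v ∂σ else ∫ v, kmono b p p q q v ∂σ)
          = (∫ v, kmono b p p q q v ∂σ) + (if i' = k'
            then (∫ v, kmono b p p p p v ∂σ - ∫ v, kmono b p p q q v ∂σ) else 0) := by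
        intro k'; by_cases h : i' = k' <;> simp [h]
      rw [Finset.sum_congr rfl fun k' _ => this k']
      rw [Finset.sum_add_distrib, Finset.sum_const, Finset.sum_ite_eq, if_pos (Finset.mem_univ _)]
      simp only [Finset.card_univ, Fintype.card_fin, nsmul_eq_mul]
    rw [Finset.sum_congr rfl (fun i' _ => hinner i')] at hnorm
    rw [Finset.sum_const, Finset.card_univ] at hnorm
    simp only [Fintype.card_fin, nsmul_eq_mul] at hnorm
    -- hnorm : n * (n * m22 + (m4 - m22)) = 1, hhad : m4 = 2 * m22
    constructor
    · -- m22 = κ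
      have hx : ((n : ℂ) * ((n : ℂ) + 1)) * ∫ v, kmono b p p q q v ∂σ = 1 := by
        rw [hhad] at hnorm
        linear_combination hnorm
      calc ∫ v, kmono b p p q q v ∂σ
          = ((n : ℂ) * ((n : ℂ) + 1))⁻¹ * (((n : ℂ) * ((n : ℂ) + 1)) * ∫ v, kmono b p p q q v ∂σ) := by
            rw [← mul_assoc, inv_mul_cancel₀ hnn, one_mul]
        _ = ((n : ℂ) * ((n : ℂ) + 1))⁻¹ := by rw [hx, mul_one]
    · have hx : ((n : ℂ) * ((n : ℂ) + 1)) * ∫ v, kmono b p p q q v ∂σ = 1 := by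
        rw [hhad] at hnorm
        linear_combination hnorm
      rw [hhad]
      have : ∫ v, kmono b p p q q v ∂σ = ((n : ℂ) * ((n : ℂ) + 1))⁻¹ := by
        calc ∫ v, kmono b p p q q v ∂σ
            = ((n : ℂ) * ((n : ℂ) + 1))⁻¹ * (((n : ℂ) * ((n : ℂ) + 1)) * ∫ v, kmono b p p q q v ∂σ) := by
              rw [← mul_assoc, inv_mul_cancel₀ hnn, one_mul]
          _ = ((n : ℂ) * ((n : ℂ) + 1))⁻¹ := by rw [hx, mul_one]
      rw [this]
  by_cases hn2 : 2 ≤ n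
  case neg =>
    -- n = 1
    have hn1 : n = 1 := by omega
    subst hn1
    have hall : ∀ a c : Fin 1, a = c := fun a c => Subsingleton.elim a c
    rw [hall i 0, hall j 0, hall k 0, hall l 0]
    have hnorm := kmono_sum_integral_one hsphere b
    simp only [Fin.sum_univ_one] at hnorm
    rw [hnorm]
    norm_num
  case pos =>
    by_cases hA : i = j ∧ k = l
    · obtain ⟨h1, h2⟩ := hA
      subst h1; subst h2
      by_cases hik : i = k
      · subst hik
        haveI : Nontrivial (Fin n) :=
          ⟨⟨⟨0, by omega⟩, ⟨1, by omega⟩, by simp [Fin.ext_iff]⟩⟩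
        obtain ⟨q, hq⟩ := exists_ne i
        rw [(hval i q (Ne.symm hq)).2]
        norm_num
      · rw [(hval i k hik).1]
        have : ¬ (i = k ∧ i = i) := fun h => hik h.1
        simp [hik]
    · by_cases hB : i = l ∧ j = k
      · obtain ⟨h1, h2⟩ := hB
        subst h1; subst h2
        have hij : i ≠ j := by
          intro h
          exact hA ⟨h, by rw [h]⟩
        rw [kmono_swap_mid b i j, (hval i j hij).1]
        simp [hij]
      · have hnb : ¬ ∀ m : Fin n, ((if i = m then 1 else 0) + (if k = m then 1 else 0) : ℕ) =
            (if j = m then 1 else 0) + (if l = m then 1 else 0) := by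
          intro hall
          rcases balanced_pattern hall with h | h
          · exact hA h
          · exact hB ⟨h.1, h.2.symm⟩
        obtain ⟨m, hm⟩ := not_forall.1 hnb
        rw [kmono_phase_zero hn hdim hinv b m i j k l hm]
        have hA' : ¬ (i = j ∧ k = l) := hA
        have hB' : ¬ (i = l ∧ j = k) := hB
        simp [hA', hB']

end MeasPart2

lemma sum_indicator_contract {n : ℕ} (A : Fin n → Fin n → Fin n → Fin n → ℂ) (κ : ℂ) :
    (∑ i : Fin n, ∑ j : Fin n, ∑ k : Fin n, ∑ l : Fin n,
        (((if i = j ∧ k = l then (1:ℂ) else 0) + (if i = l ∧ j = k then 1 else 0)) * κ)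
          * A i j k l)
      = κ * ((∑ i : Fin n, ∑ k : Fin n, A i i k k) + (∑ i : Fin n, ∑ j : Fin n, A i j j i)) := by
  classical
  have hirrel : ∀ {β : Type} (c : Prop) [Decidable c] (s : Finset β) (f : β → ℂ),
      (∑ x ∈ s, if c then f x else 0) = if c then ∑ x ∈ s, f x else 0 := by
    intros β c _ s f
    split <;> simp
  simp only [add_mul, ite_mul, one_mul, zero_mul, Finset.sum_add_distrib, ite_and]
  simp only [hirrel, Finset.sum_ite_eq, Finset.mem_univ, if_true]
  simp only [Finset.mul_sum, mul_add]

end KahlerAux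

/-- The scalar curvature as an average of the holomorphic sectional curvature:
for the uniform (normalized, rotation-invariant — i.e. invariant under all
unitary automorphisms) probability measure `σ` on the unit sphere of `V`
(`dim_ℂ V = n ≥ 1`) and any orthonormal basis `e₁, …, e_n`,
`∫ R(v,v̄,v,v̄) dσ(v) = (2/(n(n+1))) ∑_{i,j} R(e i, e i, e j, e j)`. -/
theorem integral_hsc_eq_scalar_curvature
    {V : Type*} [NormedAddCommGroup V] [InnerProductSpace ℂ V]
    [FiniteDimensional ℂ V] [MeasurableSpace V] [BorelSpace V]
    (n : ℕ) (hn : 1 ≤ n) (hdim : Module.finrank ℂ V = n)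
    (T : KahlerCurvatureTensor V)
    (σ : Measure V) [IsProbabilityMeasure σ]
    (hsphere : σ (Metric.sphere (0 : V) 1) = 1)
    (hinv : ∀ U : V ≃ₗᵢ[ℂ] V, Measure.map (U : V → V) σ = σ)
    (e : Fin n → V) (he : Orthonormal ℂ e)
    (hspan : Submodule.span ℂ (Set.range e) = ⊤) :
    ∫ v, (T.R v v v v).re ∂σ =
      (2 / ((n : ℝ) * (n + 1))) *
        ∑ i : Fin n, ∑ j : Fin n, (T.R (e i) (e i) (e j) (e j)).re := by
  classical
  have hb2 : ⊤ ≤ Submodule.span ℂ (Set.range e) := hspan.ge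
  set b : OrthonormalBasis (Fin n) ℂ V := OrthonormalBasis.mk he hb2 with hbdef
  have hbe : ∀ a, b a = e a := fun a => by
    rw [hbdef]
    exact congrFun (OrthonormalBasis.coe_mk he hb2) a
  have hexp : ∀ v, T.R v v v v
      = ∑ i, ∑ j, ∑ k, ∑ l, kmono b i j k l v * T.R (b i) (b j) (b k) (b l) :=
    fun v => T.expand b v
  have hI1 : ∀ i j k l : Fin n,
      Integrable (fun v => kmono b i j k l v * T.R (b i) (b j) (b k) (b l)) σ :=
    fun i j k l => (integrable_kmono' σ hsphere b i j k l).mul_const _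
  have hF : Integrable (fun v => T.R v v v v) σ := by
    rw [show (fun v => T.R v v v v)
        = fun v => ∑ i, ∑ j, ∑ k, ∑ l, kmono b i j k l v * T.R (b i) (b j) (b k) (b l)
      from funext hexp]
    exact integrable_finset_sum _ fun i _ => integrable_finset_sum _ fun j _ =>
      integrable_finset_sum _ fun k _ => integrable_finset_sum _ fun l _ => hI1 i j k l
  have hre : ∫ v, (T.R v v v v).re ∂σ = (∫ v, T.R v v v v ∂σ).re := by
    have h := integral_re hF
    simpa [RCLike.re_to_complex] using h
  have hIval : ∫ v, T.R v v v v ∂σ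
      = ((n : ℂ) * ((n : ℂ) + 1))⁻¹
          * ((∑ i : Fin n, ∑ k : Fin n, T.R (b i) (b i) (b k) (b k))
            + (∑ i : Fin n, ∑ k : Fin n, T.R (b i) (b i) (b k) (b k))) := by
    calc ∫ v, T.R v v v v ∂σ
        = ∑ i, ∑ j, ∑ k, ∑ l,
            (∫ v, kmono b i j k l v ∂σ) * T.R (b i) (b j) (b k) (b l) := by
          simp_rw [hexp]
          rw [integral_finset_sum _ (fun i _ => integrable_finset_sum _ fun j _ =>
            integrable_finset_sum _ fun k _ => integrable_finset_sum _ fun l _ => hI1 i j k l)]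
          refine Finset.sum_congr rfl fun i _ => ?_
          rw [integral_finset_sum _ (fun j _ =>
            integrable_finset_sum _ fun k _ => integrable_finset_sum _ fun l _ => hI1 i j k l)]
          refine Finset.sum_congr rfl fun j _ => ?_
          rw [integral_finset_sum _ (fun k _ =>
            integrable_finset_sum _ fun l _ => hI1 i j k l)]
          refine Finset.sum_congr rfl fun k _ => ?_
          rw [integral_finset_sum _ (fun l _ => hI1 i j k l)]
          refine Finset.sum_congr rfl fun l _ => ?_
          exact integral_mul_const _ _
      _ = ∑ i, ∑ j, ∑ k, ∑ l,
            ((((if i = j ∧ k = l then (1:ℂ) else 0) + (if i = l ∧ j = k then 1 else 0))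
              * ((n : ℂ) * ((n : ℂ) + 1))⁻¹) * T.R (b i) (b j) (b k) (b l)) := by
          refine Finset.sum_congr rfl fun i _ => Finset.sum_congr rfl fun j _ =>
            Finset.sum_congr rfl fun k _ => Finset.sum_congr rfl fun l _ => ?_
          rw [kmono_moment hn hdim hsphere hinv b i j k l]
      _ = ((n : ℂ) * ((n : ℂ) + 1))⁻¹
            * ((∑ i : Fin n, ∑ k : Fin n, T.R (b i) (b i) (b k) (b k))
              + (∑ i : Fin n, ∑ j : Fin n, T.R (b i) (b j) (b j) (b i))) :=
          sum_indicator_contract (fun i j k l => T.R (b i) (b j) (b k) (b l)) _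
      _ = ((n : ℂ) * ((n : ℂ) + 1))⁻¹
            * ((∑ i : Fin n, ∑ k : Fin n, T.R (b i) (b i) (b k) (b k))
              + (∑ i : Fin n, ∑ k : Fin n, T.R (b i) (b i) (b k) (b k))) := by
          congr 1
          congr 1
          rw [Finset.sum_comm]
          exact Finset.sum_congr rfl fun j _ => Finset.sum_congr rfl fun i _ =>
            T.symm_exch (b i) (b j) (b j) (b i)
  rw [hre, hIval]
  have hcast : ((n : ℂ) * ((n : ℂ) + 1))⁻¹ = ((((n : ℝ) * ((n : ℝ) + 1))⁻¹ : ℝ) : ℂ) := by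
    push_cast
    ring
  rw [hcast, Complex.re_ofReal_mul]
  simp only [hbe, Complex.add_re, Complex.re_sum]
  have hnR : ((n : ℝ) * ((n : ℝ) + 1)) ≠ 0 := by
    have h0 : (0:ℝ) < (n : ℝ) := by exact_mod_cast Nat.pos_of_ne_zero (by omega)
    positivity
  field_simp
  ring
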